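/- arXiv:math-ph/0608010 — 2 statements merged into one kernel-verified Lean document; each statement's English description precedes it below -/
import Mathlib

section
/- Consider the 2-dimensional complex ODE system iħ ċ_R = −ω c_L + Ω c_R + εC_σ|c_R|^{2σ}c_R, iħ ċ_L = −ω c_R + Ω c_L + εC_σ|c_L|^{2σ}c_L, with real parameters ħ > 0, ω, Ω, ε, C_σ and σ a positive integer. Then the quantity I(c_R, c_L) = Ω(|c_R|² + |c_L|²) − ω(conj(c_R)c_L + conj(c_L)c_R) + (εC_σ/(σ+1))(|c_R|^{2(σ+1)} + |c_L|^{2(σ+1)}) is constant along any C¹ solution. -/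
/-!
The invariant `I` is the Hamiltonian of the system: the bracket `F_R` on the right-hand side of the
equation for `c_R` is the Wirtinger derivative `∂I/∂c̄_R` (likewise for `F_L`), so along any curve
`dI/dt = 2 Re (F̄_R ċ_R + F̄_L ċ_L)`. On a solution `ċ = (iħ)⁻¹ F`, and each term
`F̄ (iħ)⁻¹ F = (iħ)⁻¹ |F|²` is purely imaginary.
-/

open Complex ComplexConjugate

noncomputable section

variable (ω Ω ε Cσ : ℝ) (σ : ℕ)

def twoModeField (a b : ℂ) : ℂ :=
  -(ω : ℂ) * b + (Ω : ℂ) * a + (ε : ℂ) * (Cσ : ℂ) * ((‖a‖ ^ (2 * σ) : ℝ) : ℂ) * a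

def twoModeEnergy (a b : ℂ) : ℝ :=
  Ω * (‖a‖ ^ 2 + ‖b‖ ^ 2) - ω * (conj a * b + conj b * a).re
    + ε * Cσ / (σ + 1) * (‖a‖ ^ (2 * (σ + 1)) + ‖b‖ ^ (2 * (σ + 1)))

lemma hasDerivAt_norm_pow_two_mul {E : Type*} [NormedAddCommGroup E] [InnerProductSpace ℝ E]
    {c : ℝ → E} {c' : E} {t : ℝ} (hc : HasDerivAt c c' t) (n : ℕ) :
    HasDerivAt (fun s => ‖c s‖ ^ (2 * n))
      ((n : ℝ) * ‖c t‖ ^ (2 * (n - 1)) * (2 * inner ℝ (c t) c')) t := by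
  simpa only [← pow_mul] using hc.norm_sq.fun_pow n

lemma hasDerivAt_twoModeEnergy {a b : ℝ → ℂ} {a' b' : ℂ} {t : ℝ}
    (ha : HasDerivAt a a' t) (hb : HasDerivAt b b' t) :
    HasDerivAt (fun s => twoModeEnergy ω Ω ε Cσ σ (a s) (b s))
      (2 * (conj (twoModeField ω Ω ε Cσ σ (a t) (b t)) * a'
        + conj (twoModeField ω Ω ε Cσ σ (b t) (a t)) * b').re) t := by
  have hcross : HasDerivAt (fun s => (conj (a s) * b s + conj (b s) * a s).re)
      (conj a' * b t + conj (a t) * b' + (conj b' * a t + conj (b t) * a')).re t :=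
    reCLM.hasFDerivAt.comp_hasDerivAt t ((ha.star.mul hb).add (hb.star.mul ha))
  refine ((((ha.norm_sq.add hb.norm_sq).const_mul Ω).sub (hcross.const_mul ω)).add
    (((hasDerivAt_norm_pow_two_mul ha (σ + 1)).add
      (hasDerivAt_norm_pow_two_mul hb (σ + 1))).const_mul (ε * Cσ / (σ + 1)))).congr_deriv ?_
  simp only [twoModeField, Complex.inner, map_add, map_mul, map_neg, conj_ofReal, mul_re, add_re,
    neg_re, ofReal_re, ofReal_im, conj_re, conj_im, mul_im, add_im, neg_im, Nat.add_sub_cancel]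
  push_cast
  field_simp
  ring

lemma re_conj_mul_mul_self_of_re_eq_zero {w : ℂ} (hw : w.re = 0) (z : ℂ) :
    (conj z * (w * z)).re = 0 := by
  rw [mul_left_comm, conj_mul', ← ofReal_pow, re_mul_ofReal, hw, zero_mul]

lemma hasDerivAt_twoModeEnergy_eq_zero (hbar : ℝ) {a b : ℝ → ℂ} {t : ℝ}
    (ha : HasDerivAt a ((I * hbar)⁻¹ * twoModeField ω Ω ε Cσ σ (a t) (b t)) t)
    (hb : HasDerivAt b ((I * hbar)⁻¹ * twoModeField ω Ω ε Cσ σ (b t) (a t)) t) :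
    HasDerivAt (fun s => twoModeEnergy ω Ω ε Cσ σ (a s) (b s)) 0 t := by
  have hre : ((I * hbar)⁻¹).re = 0 := by simp
  simpa only [add_re, re_conj_mul_mul_self_of_re_eq_zero hre, add_zero, mul_zero]
    using hasDerivAt_twoModeEnergy ω Ω ε Cσ σ ha hb

end

theorem stmt4_general (hbar ω Ω ε Cσ : ℝ) (σ : ℕ)
    (cR cL : ℝ → ℂ)
    (hR : ∀ t, HasDerivAt cR
      ((Complex.I * hbar)⁻¹ * (-(ω : ℂ) * cL t + (Ω : ℂ) * cR t
        + (ε : ℂ) * (Cσ : ℂ) * ((‖cR t‖ ^ (2 * σ) : ℝ) : ℂ) * cR t)) t)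
    (hL : ∀ t, HasDerivAt cL
      ((Complex.I * hbar)⁻¹ * (-(ω : ℂ) * cR t + (Ω : ℂ) * cL t
        + (ε : ℂ) * (Cσ : ℂ) * ((‖cL t‖ ^ (2 * σ) : ℝ) : ℂ) * cL t)) t) :
    ∀ t : ℝ,
      Ω * (‖cR t‖ ^ 2 + ‖cL t‖ ^ 2)
        - ω * ((starRingEnd ℂ (cR t) * cL t + starRingEnd ℂ (cL t) * cR t).re)
        + ε * Cσ / (σ + 1) * (‖cR t‖ ^ (2 * (σ + 1)) + ‖cL t‖ ^ (2 * (σ + 1)))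
      = Ω * (‖cR 0‖ ^ 2 + ‖cL 0‖ ^ 2)
        - ω * ((starRingEnd ℂ (cR 0) * cL 0 + starRingEnd ℂ (cL 0) * cR 0).re)
        + ε * Cσ / (σ + 1) * (‖cR 0‖ ^ (2 * (σ + 1)) + ‖cL 0‖ ^ (2 * (σ + 1))) := by
  have hconserved (t : ℝ) :
      HasDerivAt (fun s => twoModeEnergy ω Ω ε Cσ σ (cR s) (cL s)) 0 t :=
    hasDerivAt_twoModeEnergy_eq_zero ω Ω ε Cσ σ hbar (hR t) (hL t)
  intro t
  exact is_const_of_deriv_eq_zero (fun s => (hconserved s).differentiableAt)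
    (fun s => (hconserved s).deriv) t 0

/-- The quantity
`I = Ω(|c_R|²+|c_L|²) − ω(c̄_R c_L + c̄_L c_R) + (εC_σ/(σ+1))(|c_R|^{2(σ+1)}+|c_L|^{2(σ+1)})`
is conserved along any C¹ solution of the two-mode nonlinear system. -/
theorem stmt4 (hbar ω Ω ε Cσ : ℝ) (hhbar : 0 < hbar) (σ : ℕ) (hσ : 1 ≤ σ)
    (cR cL : ℝ → ℂ)
    (hR : ∀ t, HasDerivAt cR
      ((Complex.I * hbar)⁻¹ * (-(ω : ℂ) * cL t + (Ω : ℂ) * cR t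
        + (ε : ℂ) * (Cσ : ℂ) * ((‖cR t‖ ^ (2 * σ) : ℝ) : ℂ) * cR t)) t)
    (hL : ∀ t, HasDerivAt cL
      ((Complex.I * hbar)⁻¹ * (-(ω : ℂ) * cR t + (Ω : ℂ) * cL t
        + (ε : ℂ) * (Cσ : ℂ) * ((‖cL t‖ ^ (2 * σ) : ℝ) : ℂ) * cL t)) t) :
    ∀ t : ℝ,
      Ω * (‖cR t‖ ^ 2 + ‖cL t‖ ^ 2)
        - ω * ((starRingEnd ℂ (cR t) * cL t + starRingEnd ℂ (cL t) * cR t).re)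
        + ε * Cσ / (σ + 1) * (‖cR t‖ ^ (2 * (σ + 1)) + ‖cL t‖ ^ (2 * (σ + 1)))
      = Ω * (‖cR 0‖ ^ 2 + ‖cL 0‖ ^ 2)
        - ω * ((starRingEnd ℂ (cR 0) * cL 0 + starRingEnd ℂ (cL 0) * cR 0).re)
        + ε * Cσ / (σ + 1) * (‖cR 0‖ ^ (2 * (σ + 1)) + ‖cL 0‖ ^ (2 * (σ + 1))) :=
  stmt4_general hbar ω Ω ε Cσ σ cR cL hR hL
end

section
/- Let (λ_k)_{k≥1} be positive reals with λ_1 < λ_2 < λ_k for k ≥ 3 and λ_k − Ω ≥ cħλ_k for k ≥ 3 where Ω = (λ_1+λ_2)/2 and 0 < cħ < 1. Suppose ζ(t) is a curve on the unit ℓ²-sphere such that h_0(ζ(t)) + p(t) = const with h_0(ζ) = Ω(|ζ_1|²+|ζ_2|²) + Σ_{k≥3}λ_k|ζ_k|² and |p(t)| ≤ b for all t. If ‖Π_cζ(0)‖_1² ≤ a then for all t, ‖Π_cζ(t)‖_1² ≤ (a + 2b)/(cħ), where ‖Π_cζ‖_1² = Σ_{k≥3}λ_k|ζ_k|². -/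
/-- Almost invariance of the two-dimensional eigenspace at the sequence level:
with the spectral gap `λ_k − Ω ≥ cħ λ_k` for `k ≥ 2` (indices shifted to start at 0),
if the curve `ζ(t)` stays on the unit sphere, `h₀(ζ(t)) + p(t)` is conserved with
`|p(t)| ≤ b`, and `‖Π_c ζ(0)‖₁² ≤ a`, then `‖Π_c ζ(t)‖₁² ≤ (a + 2b)/cħ` for all `t`. -/
theorem stmt11 (lam : ℕ → ℝ) (hpos : ∀ k, 0 < lam k)
    (h01 : lam 0 < lam 1) (h1k : ∀ k, 2 ≤ k → lam 1 < lam k)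
    (Ω : ℝ) (hΩ : Ω = (lam 0 + lam 1) / 2) (hΩpos : 0 < Ω)
    (ch : ℝ) (hch : 0 < ch ∧ ch < 1)
    (hgap : ∀ k, 2 ≤ k → ch * lam k ≤ lam k - Ω)
    (ν : ℕ → ℝ) (hν : ∀ k, ν k = if k < 2 then Ω else lam k)
    (a b : ℝ) (ha : 0 ≤ a) (hb : 0 ≤ b)
    (ζ : ℝ → ℕ → ℂ) (p : ℝ → ℝ)
    (hsum : ∀ t, Summable (fun k => lam k * ‖ζ t k‖ ^ 2))
    (hnorm : ∀ t, ∑' k, ‖ζ t k‖ ^ 2 = 1)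
    (hcons : ∀ t, (∑' k, ν k * ‖ζ t k‖ ^ 2) + p t
        = (∑' k, ν k * ‖ζ 0 k‖ ^ 2) + p 0)
    (hp : ∀ t, |p t| ≤ b)
    (hinit : ∑' k : {k : ℕ // 2 ≤ k}, lam k * ‖ζ 0 k‖ ^ 2 ≤ a) :
    ∀ t, ∑' k : {k : ℕ // 2 ≤ k}, lam k * ‖ζ t k‖ ^ 2 ≤ (a + 2 * b) / ch := by
  obtain ⟨hch0, hch1⟩ := hch
  have hlam0 : 0 < lam 0 := hpos 0
  have hlamge : ∀ k, lam 0 ≤ lam k := by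
    intro k
    match k with
    | 0 => exact le_refl _
    | 1 => exact h01.le
    | (n+2) => exact (h01.trans (h1k (n+2) (by omega))).le
  -- square-norm sequence is summable
  have hn : ∀ t, Summable (fun k => ‖ζ t k‖ ^ 2) := by
    intro t
    refine Summable.of_nonneg_of_le (fun k => sq_nonneg _) (fun k => ?_)
      ((hsum t).mul_left (lam 0)⁻¹)
    have h2 : lam 0 * ‖ζ t k‖ ^ 2 ≤ lam k * ‖ζ t k‖ ^ 2 :=
      mul_le_mul_of_nonneg_right (hlamge k) (sq_nonneg _)
    nlinarith [mul_le_mul_of_nonneg_left h2 (inv_nonneg.mpr hlam0.le),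
      mul_inv_cancel₀ hlam0.ne']
  have hνnonneg : ∀ k, 0 ≤ ν k := by
    intro k; rw [hν]; split
    · exact hΩpos.le
    · exact (hpos k).le
  have hgnu : ∀ t, Summable (fun k => ν k * ‖ζ t k‖ ^ 2) := by
    intro t
    refine Summable.of_nonneg_of_le (fun k => mul_nonneg (hνnonneg k) (sq_nonneg _))
      (fun k => ?_) (((hn t).mul_left Ω).add (hsum t))
    have hνle : ν k ≤ Ω + lam k := by
      rw [hν]; split
      · nlinarith [hpos k]
      · nlinarith
    calc ν k * ‖ζ t k‖ ^ 2 ≤ (Ω + lam k) * ‖ζ t k‖ ^ 2 := by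
          exact mul_le_mul_of_nonneg_right hνle (sq_nonneg _)
      _ = Ω * ‖ζ t k‖ ^ 2 + lam k * ‖ζ t k‖ ^ 2 := by ring
  have hdt : ∀ t, Summable (fun k => (lam k - Ω) * ‖ζ t k‖ ^ 2) := by
    intro t
    have := (hsum t).sub ((hn t).mul_left Ω)
    simpa [sub_mul] using this
  -- key identity: tail sum of (lam - Ω) weights equals h₀ − Ω
  have hT : ∀ t, (∑' k : {k : ℕ // 2 ≤ k}, (lam k.1 - Ω) * ‖ζ t k.1‖ ^ 2)
      = (∑' k, ν k * ‖ζ t k‖ ^ 2) - Ω := by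
    intro t
    have hind : ∀ k, ({k : ℕ | 2 ≤ k}.indicator (fun k => (lam k - Ω) * ‖ζ t k‖ ^ 2)) k
        = (ν k - Ω) * ‖ζ t k‖ ^ 2 := by
      intro k
      simp only [Set.indicator_apply, Set.mem_setOf_eq, hν]
      by_cases hk : 2 ≤ k
      · rw [if_pos hk, if_neg (Nat.not_lt.mpr hk)]
      · rw [if_neg hk, if_pos (Nat.lt_of_not_le hk)]
        ring
    calc (∑' k : {k : ℕ // 2 ≤ k}, (lam k.1 - Ω) * ‖ζ t k.1‖ ^ 2)
        = ∑' k, ({k : ℕ | 2 ≤ k}.indicator (fun k => (lam k - Ω) * ‖ζ t k‖ ^ 2)) k :=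
          tsum_subtype {k : ℕ | 2 ≤ k} (fun k => (lam k - Ω) * ‖ζ t k‖ ^ 2)
      _ = ∑' k, (ν k - Ω) * ‖ζ t k‖ ^ 2 := tsum_congr hind
      _ = ∑' k, (ν k * ‖ζ t k‖ ^ 2 - Ω * ‖ζ t k‖ ^ 2) := by
          congr 1; funext k; ring
      _ = (∑' k, ν k * ‖ζ t k‖ ^ 2) - ∑' k, Ω * ‖ζ t k‖ ^ 2 :=
          Summable.tsum_sub (hgnu t) ((hn t).mul_left Ω)
      _ = (∑' k, ν k * ‖ζ t k‖ ^ 2) - Ω := by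
          rw [tsum_mul_left, hnorm t, mul_one]
  -- summability on the subtype
  have hsubl : ∀ t, Summable (fun k : {k : ℕ // 2 ≤ k} => lam k.1 * ‖ζ t k.1‖ ^ 2) :=
    fun t => (hsum t).subtype _
  have hsubd : ∀ t, Summable (fun k : {k : ℕ // 2 ≤ k} => (lam k.1 - Ω) * ‖ζ t k.1‖ ^ 2) :=
    fun t => (hdt t).subtype _
  -- T 0 ≤ a
  have hT0 : (∑' k : {k : ℕ // 2 ≤ k}, (lam k.1 - Ω) * ‖ζ 0 k.1‖ ^ 2) ≤ a := by
    refine le_trans (Summable.tsum_le_tsum (fun k => ?_) (hsubd 0) (hsubl 0)) hinit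
    nlinarith [sq_nonneg ‖ζ (0:ℝ) k.1‖]
  intro t
  -- conservation: T t ≤ a + 2b
  have hTt : (∑' k : {k : ℕ // 2 ≤ k}, (lam k.1 - Ω) * ‖ζ t k.1‖ ^ 2) ≤ a + 2 * b := by
    have h1 := hcons t
    have h2 := hp t
    have h3 := hp 0
    have e1 := hT t
    have e2 := hT 0
    rw [abs_le] at h2 h3
    linarith
  -- gap estimate: ch * S t ≤ T t
  have hgapS : ch * (∑' k : {k : ℕ // 2 ≤ k}, lam k.1 * ‖ζ t k.1‖ ^ 2)
      ≤ ∑' k : {k : ℕ // 2 ≤ k}, (lam k.1 - Ω) * ‖ζ t k.1‖ ^ 2 := by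
    rw [← tsum_mul_left]
    refine Summable.tsum_le_tsum (fun k => ?_) ((hsubl t).mul_left ch) (hsubd t)
    have := hgap k.1 k.2
    nlinarith [sq_nonneg ‖ζ t k.1‖]
  rw [le_div_iff₀ hch0]
  nlinarith
end
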